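/- arXiv:2604.21486 — 2 statements merged into one kernel-verified Lean document; each statement's English description precedes it below -/
import Mathlib

section
/- Let k ≥ 3 and 0 < ε ≤ (k-1)/2 be integers and let G be a vgr(n, k, 5, k(k-1)²/2 − ε)-graph. Let u be a vertex of G and let v be a vertex at distance exactly 3 from u whose unique neighbor in N_2(u) is v'. Define V_{C'} = (N_2(v) ∩ N(v')) ∖ (N(u) ∪ N_2(u)). Then there is no edge of G joining a vertex of V_{C'} ∪ {v} to a vertex of N_2(u) ∖ {v'}. -/
open SimpleGraph

/-- The set of vertices at distance exactly 2 from `v` in `G` (denoted `N₂(v)`). -/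
def distTwoSet {V : Type*} (G : SimpleGraph V) (v : V) : Set V := {w | G.dist v w = 2}

/-- The set of edges of `G` with one endpoint in `A` and the other endpoint in `B`,
denoted `E(A, B)`. -/
def edgesBetween {V : Type*} (G : SimpleGraph V) (A B : Set V) : Set (Sym2 V) :=
  {e | e ∈ G.edgeSet ∧ ∃ a ∈ A, ∃ b ∈ B, e = s(a, b)}

/-- Twice the number of cycles of length `g` through the vertex `v`: we count the closed
walks based at `v` that are cycles of length `g`; every (undirected) cycle of length `g`
containing `v` corresponds to exactly two such walks (its two orientations). -/
noncomputable def doubleCycleCountAt {V : Type*} (G : SimpleGraph V) (g : ℕ) (v : V) : ℕ :=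
  {p : G.Walk v v | p.IsCycle ∧ p.length = g}.ncard

/-- `G` is a `vgr(n, k, g, lam)`-graph: a `k`-regular graph of girth `g` on `n` vertices
in which every vertex lies on exactly `lam` cycles of length `g` (equivalently, the number
of closed cycle-walks of length `g` based at each vertex is `2 * lam`). -/
def IsVGR {V : Type*} [Fintype V] (G : SimpleGraph V) [DecidableRel G.Adj]
    (n k g lam : ℕ) : Prop :=
  Fintype.card V = n ∧ (∀ v : V, G.degree v = k) ∧ G.girth = (g : ℕ∞) ∧
    ∀ v : V, doubleCycleCountAt G g v = 2 * lam

/-!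
In a `k`-regular graph of girth 5, every `z ∈ N₂(a)` has exactly one neighbour in `N₁(a)`, hence
`k - 1` in `N₂(a) ∪ N₃(a)`, and `|N₂(a)| = k(k - 1)`. The two orientations of a 5-cycle through `a`
give distinct edges inside `N₂(a)`, so in a `vgr(n, k, 5, k(k-1)²/2 - ε)`-graph at most `2ε` edges
join `N₂(a)` to `N₃(a)`.

Let `u - p - v' - v` be the path from `u` to `v`. The edges from `N₂(u)` to `N₃(u)` include those
leaving `v'`, plus one from each neighbour of `p` at distance 2 from `v`; symmetrically at `v`,
with `p` and `v'` exchanged. Together these are `2(k - 1) ≥ 4ε` edges, so neither budget has room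
for one more. An edge `wx` as in the statement would add one at `u` (namely `xw`) and one at `v`.
-/

open Finset

namespace SimpleGraph
variable {V : Type*} {G : SimpleGraph V} {a a₁ b b₁ b' c p s u v v' w x y z : V}

lemma not_adj_of_adj_of_adj (hg : 4 ≤ G.egirth) (hab : G.Adj a b) (hbc : G.Adj b c) :
    ¬ G.Adj a c := by
  intro hac
  have hcyc : (Walk.cons hab (.cons hbc (.cons hac.symm .nil))).IsCycle := by
    simp [Walk.cons_isCycle_iff, hab.ne, hbc.ne, hac.ne, hab.ne.symm, hac.ne.symm]
  exact absurd (hg.trans (egirth_le_length hcyc)) (by norm_num)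

lemma eq_of_adj_of_adj_of_adj_of_adj (hg : 5 ≤ G.egirth) (hac : a ≠ c) (hab : G.Adj a b)
    (hbc : G.Adj b c) (hab' : G.Adj a b') (hb'c : G.Adj b' c) : b = b' := by
  by_contra hbb'
  have hcyc : (Walk.cons hab (.cons hbc (.cons hb'c.symm (.cons hab'.symm .nil)))).IsCycle := by
    simp [Walk.cons_isCycle_iff, hab.ne, hbc.ne, hab'.ne, hab.ne.symm, hab'.ne.symm,
      hb'c.ne.symm, hac, Ne.symm hac, hbb']
  exact absurd (hg.trans (egirth_le_length hcyc)) (by norm_num)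

lemma dist_eq_two_iff :
    G.dist a c = 2 ↔ a ≠ c ∧ ¬ G.Adj a c ∧ (G.commonNeighbors a c).Nonempty := by
  rw [← edist_eq_two_iff, dist, ENat.toNat_eq_iff two_ne_zero]
  rfl

lemma dist_eq_two_of_adj_of_adj (hg : 4 ≤ G.egirth) (hac : a ≠ c) (hab : G.Adj a b)
    (hbc : G.Adj b c) : G.dist a c = 2 :=
  dist_eq_two_iff.mpr ⟨hac, not_adj_of_adj_of_adj hg hab hbc, b, hab, hbc.symm⟩

lemma dist_eq_three_of_adj_of_adj (hx : G.dist a x = 2) (hxy : G.Adj x y) (hyb : G.Adj y b)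
    (hb : G.dist a b = 3) (hy : G.dist a y ≠ 2) : G.dist a y = 3 := by
  have := hxy.diff_dist_adj (u := a)
  have := hyb.diff_dist_adj (u := a)
  omega

lemma Walk.IsCycle.dist_getVert_eq_two {p : G.Walk a a} (hg : 4 ≤ G.egirth) (hp : p.IsCycle)
    (hlen : p.length = 5) : G.dist a (p.getVert 2) = 2 ∧ G.dist a (p.getVert 3) = 2 := by
  have h5 : p.getVert 5 = a := hlen ▸ p.getVert_length
  have hadj (i : ℕ) (hi : i < 5) : G.Adj (p.getVert i) (p.getVert (i + 1)) :=
    p.adj_getVert_succ (hlen ▸ hi)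
  have hne (i : ℕ) (hi : 1 ≤ i ∧ i < 5) : p.getVert i ≠ a := fun h =>
    absurd (hp.getVert_injOn (by simp [hlen]; omega) (by simp [hlen]) (h.trans h5.symm))
      (by omega)
  refine ⟨dist_eq_two_of_adj_of_adj hg (hne 2 (by omega)).symm ?_ (hadj 1 (by omega)),
    dist_eq_two_of_adj_of_adj hg (hne 3 (by omega)).symm ?_ (hadj 3 (by omega)).symm⟩
  · simpa using hadj 0 (by omega)
  · simpa [h5] using (hadj 4 (by omega)).symm

lemma Walk.IsCycle.eq_of_getVert_eq {p q : G.Walk a a} (hg : 5 ≤ G.egirth) (hp : p.IsCycle)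
    (hplen : p.length = 5) (hqlen : q.length = 5)
    (h2 : p.getVert 2 = q.getVert 2) (h3 : p.getVert 3 = q.getVert 3) : p = q := by
  have hg4 : 4 ≤ G.egirth := le_trans (by norm_num) hg
  have hp2 := (hp.dist_getVert_eq_two hg4 hplen).1
  have hp3 := (hp.dist_getVert_eq_two hg4 hplen).2
  have hpadj (i : ℕ) (hi : i < 5) : G.Adj (p.getVert i) (p.getVert (i + 1)) :=
    p.adj_getVert_succ (hplen ▸ hi)
  have hqadj (i : ℕ) (hi : i < 5) : G.Adj (q.getVert i) (q.getVert (i + 1)) :=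
    q.adj_getVert_succ (hqlen ▸ hi)
  have hp5 : p.getVert 5 = a := hplen ▸ p.getVert_length
  have hq5 : q.getVert 5 = a := hqlen ▸ q.getVert_length
  refine Walk.ext_getVert_le_length (hplen.trans hqlen.symm) fun i hi => ?_
  rw [hplen] at hi
  interval_cases i
  · simp
  · refine eq_of_adj_of_adj_of_adj_of_adj hg (dist_eq_two_iff.mp hp2).1 ?_ (hpadj 1 (by omega))
      ?_ (h2 ▸ hqadj 1 (by omega))
    · simpa using hpadj 0 (by omega)
    · simpa using hqadj 0 (by omega)
  · exact h2
  · exact h3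
  · refine eq_of_adj_of_adj_of_adj_of_adj hg (dist_eq_two_iff.mp hp3).1 ?_
      (hpadj 3 (by omega)).symm ?_ (h3 ▸ hqadj 3 (by omega)).symm
    · simpa [hp5] using (hpadj 4 (by omega)).symm
    · simpa [hq5] using (hqadj 4 (by omega)).symm
  · exact hp5.trans hq5.symm

lemma eq_of_adj_of_dist_eq_two_of_unique (hg : 5 ≤ G.egirth) (hab : G.dist a b = 3)
    (ha1 : G.Adj a a₁) (ha1b1 : G.Adj a₁ b₁) (hb1b : G.Adj b₁ b)
    (huniq : ∀ s, G.Adj b s → G.dist a s = 2 → s = b₁) (has : G.Adj a s)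
    (hbs : G.dist b s = 2) : s = a₁ := by
  obtain ⟨-, -, m, hbm, hsm⟩ := dist_eq_two_iff.mp hbs
  have := hbm.symm.diff_dist_adj (u := a)
  have ham : G.dist a m = 2 := dist_eq_two_iff.mpr
    ⟨fun h => by subst h; simp [dist_eq_one_iff_adj.mpr hbm.symm] at hab,
      fun h => by rw [dist_eq_one_iff_adj.mpr h] at this; omega, s, has, hsm.symm⟩
  obtain rfl := huniq m hbm ham
  exact eq_of_adj_of_adj_of_adj_of_adj hg
    (fun h => by subst h; simp [dist_eq_one_iff_adj.mpr hb1b] at hab) has hsm ha1 ha1b1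

lemma exists_adj_dist_eq_three_of_adj (hg : 5 ≤ G.egirth) (hdist : G.dist u v = 3)
    (hpu : G.Adj p u) (huniq : ∀ s, G.Adj u s → G.dist v s = 2 → s = p)
    (hvw : G.dist v w = 2) (hv'w : G.Adj v' w) (huw : G.dist u w = 3) (hux : G.dist u x = 2)
    (hvx : ¬ G.Adj v x) (hpx : ¬ G.Adj p x) (hwx : G.Adj w x) :
    ∃ z y, G.dist v z = 2 ∧ z ≠ p ∧ (G.Adj v' z → G.dist u z ≠ 2) ∧ G.Adj z y ∧
      G.dist v y = 3 := by
  have hg4 : 4 ≤ G.egirth := le_trans (by norm_num) hg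
  have := hwx.diff_dist_adj (u := v)
  have hvx1 : G.dist v x ≠ 1 := fun h => hvx (dist_eq_one_iff_adj.mp h)
  obtain hvx2 | hvx3 : G.dist v x = 2 ∨ G.dist v x = 3 := by omega
  · obtain ⟨-, hux1, y, huy, hxy⟩ := dist_eq_two_iff.mp hux
    refine ⟨x, y, hvx2, fun h => hux1 (h ▸ hpu.symm), fun h => absurd h
      (not_adj_of_adj_of_adj hg4 hv'w hwx), hxy, ?_⟩
    refine dist_eq_three_of_adj_of_adj hvx2 hxy huy.symm (dist_comm.trans hdist) fun hvy => ?_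
    exact hpx (huniq y huy hvy ▸ hxy).symm
  · exact ⟨w, x, hvw, fun h => by simp [h, dist_comm, dist_eq_one_iff_adj.mpr hpu] at huw,
      fun _ => by omega, hwx, hvx3⟩

section Fintype
variable [Fintype V]

variable (G) in
noncomputable def sphereFinset (a : V) (i : ℕ) : Finset V :=
  {z | G.dist a z = i}

@[simp] lemma mem_sphereFinset {i : ℕ} : z ∈ G.sphereFinset a i ↔ G.dist a z = i := by
  simp [sphereFinset]

variable [DecidableRel G.Adj]

variable (G) in
noncomputable def neighborsAtDist (a z : V) (i : ℕ) : Finset V :=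
  {y ∈ G.neighborFinset z | G.dist a y = i}

variable (G) in
/-- `|E(N₂(a), N₃(a))|`, counted from the `N₂(a)` side. -/
noncomputable def crossEdgeCount (a : V) : ℕ :=
  ∑ z ∈ G.sphereFinset a 2, #(G.neighborsAtDist a z 3)

@[simp] lemma mem_neighborsAtDist {i : ℕ} :
    y ∈ G.neighborsAtDist a z i ↔ G.Adj z y ∧ G.dist a y = i := by
  simp [neighborsAtDist]

lemma card_neighborsAtDist_one (hg : 5 ≤ G.egirth) (hz : G.dist a z = 2) :
    #(G.neighborsAtDist a z 1) = 1 := by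
  obtain ⟨haz, -, b, hab, hzb⟩ := dist_eq_two_iff.mp hz
  refine card_eq_one.mpr ⟨b, eq_singleton_iff_unique_mem.mpr ⟨?_, fun y hy => ?_⟩⟩
  · exact mem_neighborsAtDist.mpr ⟨hzb, dist_eq_one_iff_adj.mpr hab⟩
  · rw [mem_neighborsAtDist, dist_eq_one_iff_adj] at hy
    exact eq_of_adj_of_adj_of_adj_of_adj hg haz hy.2 hy.1.symm hab hzb.symm

lemma card_neighborsAtDist_two_add_three {k : ℕ} (hreg : G.IsRegularOfDegree k)
    (hg : 5 ≤ G.egirth) (hz : G.dist a z = 2) :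
    #(G.neighborsAtDist a z 2) + #(G.neighborsAtDist a z 3) = k - 1 := by
  have hmaps : (G.neighborFinset z : Set V).MapsTo (G.dist a) ({1, 2, 3} : Finset ℕ) := by
    intro y hy
    have := (G.mem_neighborFinset z y |>.mp hy).diff_dist_adj (u := a)
    simp only [coe_insert, coe_singleton, Set.mem_insert_iff, Set.mem_singleton_iff]
    omega
  have hsplit := card_eq_sum_card_fiberwise hmaps
  rw [card_neighborFinset_eq_degree, hreg] at hsplit
  have h1 := card_neighborsAtDist_one hg hz
  simp only [neighborsAtDist] at h1 ⊢
  rw [sum_insert (by simp), sum_insert (by simp), sum_singleton, h1] at hsplit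
  omega

lemma card_sphereFinset_two {k : ℕ} (hreg : G.IsRegularOfDegree k) (hg : 5 ≤ G.egirth) :
    #(G.sphereFinset a 2) = k * (k - 1) := by
  classical
  have hg4 : 4 ≤ G.egirth := le_trans (by norm_num) hg
  have hS : G.sphereFinset a 2 =
      (G.neighborFinset a).biUnion fun b => (G.neighborFinset b).erase a := by
    ext z
    simp only [mem_sphereFinset, mem_biUnion, mem_neighborFinset, mem_erase]
    constructor
    · intro hz
      obtain ⟨haz, -, b, hab, hzb⟩ := dist_eq_two_iff.mp hz
      exact ⟨b, hab, Ne.symm haz, hzb.symm⟩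
    · rintro ⟨b, hab, hza, hbz⟩
      exact dist_eq_two_of_adj_of_adj hg4 (Ne.symm hza) hab hbz
  rw [hS, card_biUnion]
  · rw [sum_congr rfl fun b hb => ?_, sum_const, card_neighborFinset_eq_degree, hreg, smul_eq_mul]
    rw [card_erase_of_mem (by simpa using ((mem_neighborFinset ..).mp hb).symm),
      card_neighborFinset_eq_degree, hreg]
  · intro b hb b' hb' hbb'
    simp only [mem_coe, mem_neighborFinset] at hb hb'
    refine Finset.disjoint_left.mpr fun z hz hz' => ?_
    simp only [mem_erase, mem_neighborFinset] at hz hz'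
    exact hbb' (eq_of_adj_of_adj_of_adj_of_adj hg (Ne.symm hz.1) hb hz.2 hb' hz'.2)

lemma doubleCycleCountAt_five_le (hg : 5 ≤ G.egirth) :
    doubleCycleCountAt G 5 a ≤ ∑ z ∈ G.sphereFinset a 2, #(G.neighborsAtDist a z 2) := by
  have hg4 : 4 ≤ G.egirth := le_trans (by norm_num) hg
  rw [← card_sigma, doubleCycleCountAt, ← Set.ncard_coe_finset]
  refine Set.ncard_le_ncard_of_injOn (fun p => ⟨p.getVert 2, p.getVert 3⟩) ?_ ?_
  · rintro p ⟨hp, hlen⟩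
    have := hp.dist_getVert_eq_two hg4 hlen
    simpa [this] using p.adj_getVert_succ (i := 2) (by omega)
  · rintro p ⟨hp, hplen⟩ q ⟨-, hqlen⟩ hpq
    simp only [Sigma.mk.injEq, heq_eq_eq] at hpq
    exact hp.eq_of_getVert_eq hg hplen hqlen hpq.1 hpq.2

lemma crossEdgeCount_add_doubleCycleCountAt_le {k : ℕ} (hreg : G.IsRegularOfDegree k)
    (hg : 5 ≤ G.egirth) : G.crossEdgeCount a + doubleCycleCountAt G 5 a ≤ k * (k - 1) ^ 2 := by
  have hside := doubleCycleCountAt_five_le (a := a) hg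
  have htotal : ∑ z ∈ G.sphereFinset a 2,
      (#(G.neighborsAtDist a z 2) + #(G.neighborsAtDist a z 3)) = k * (k - 1) * (k - 1) := by
    rw [sum_congr rfl fun z hz =>
        card_neighborsAtDist_two_add_three hreg hg (mem_sphereFinset.mp hz),
      sum_const, card_sphereFinset_two hreg hg, smul_eq_mul]
  rw [sum_add_distrib] at htotal
  rw [crossEdgeCount, sq, ← mul_assoc]
  omega

lemma crossEdgeCount_le {k ε : ℕ} (hreg : G.IsRegularOfDegree k) (hg : 5 ≤ G.egirth)
    (hcount : doubleCycleCountAt G 5 a = 2 * (k * (k - 1) ^ 2 / 2 - ε)) :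
    G.crossEdgeCount a ≤ 2 * ε := by
  have hle := crossEdgeCount_add_doubleCycleCountAt_le (a := a) hreg hg
  obtain ⟨m, hm⟩ : Even (k * (k - 1) ^ 2) := by
    rw [sq, ← mul_assoc]
    exact k.even_mul_pred_self.mul_right _
  rw [hcount, hm] at hle
  omega

lemma card_add_card_add_one_le_crossEdgeCount (hg : 4 ≤ G.egirth) (hab : G.dist a b = 3)
    (ha1 : G.Adj a a₁) (ha1b1 : G.Adj a₁ b₁) (hb1b : G.Adj b₁ b)
    (huniq : ∀ s, G.Adj b s → G.dist a s = 2 → s = b₁)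
    (hz : G.dist a z = 2) (hzb1 : z ≠ b₁) (hza1 : G.Adj a₁ z → G.dist b z ≠ 2)
    (hzy : G.Adj z y) (hy : G.dist a y = 3) :
    #(G.neighborsAtDist a b₁ 3) + #(G.neighborsAtDist b a₁ 2) + 1 ≤ G.crossEdgeCount a := by
  classical
  set Q := G.neighborsAtDist b a₁ 2
  have hQ (q : V) (hq : q ∈ Q) : G.dist a q = 2 ∧ (G.neighborsAtDist a q 3).Nonempty := by
    obtain ⟨ha1q, hbq⟩ := mem_neighborsAtDist.mp hq
    have haq : G.dist a q = 2 := dist_eq_two_of_adj_of_adj hg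
      (fun h => by subst h; rw [dist_comm] at hab; omega) ha1 ha1q
    obtain ⟨-, -, m, hbm, hqm⟩ := dist_eq_two_iff.mp hbq
    refine ⟨haq, m, mem_neighborsAtDist.mpr ⟨hqm, ?_⟩⟩
    refine dist_eq_three_of_adj_of_adj haq hqm hbm.symm hab fun ham => ?_
    exact not_adj_of_adj_of_adj hg ha1q (huniq m hbm ham ▸ hqm) ha1b1
  have hab1 : G.dist a b₁ = 2 := by
    have := hb1b.diff_dist_adj (u := a)
    have := ha1b1.diff_dist_adj (u := a)
    rw [dist_eq_one_iff_adj.mpr ha1] at this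
    omega
  have hb1 : b₁ ∉ insert z Q := by
    rw [mem_insert, not_or]
    refine ⟨Ne.symm hzb1, fun hq => ?_⟩
    have := (mem_neighborsAtDist.mp hq).2
    rw [dist_comm, dist_eq_one_iff_adj.mpr hb1b] at this
    omega
  have hzQ : z ∉ Q := fun hq => hza1 (mem_neighborsAtDist.mp hq).1 (mem_neighborsAtDist.mp hq).2
  have hsub : insert b₁ (insert z Q) ⊆ G.sphereFinset a 2 := by
    intro w hw
    simp only [mem_insert] at hw
    rcases hw with rfl | rfl | hw
    exacts [mem_sphereFinset.mpr hab1, mem_sphereFinset.mpr hz, mem_sphereFinset.mpr (hQ w hw).1]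
  calc #(G.neighborsAtDist a b₁ 3) + #Q + 1
      ≤ #(G.neighborsAtDist a b₁ 3) + (#(G.neighborsAtDist a z 3) +
          ∑ q ∈ Q, #(G.neighborsAtDist a q 3)) := by
        have h1 : 1 ≤ #(G.neighborsAtDist a z 3) :=
          card_pos.mpr ⟨y, mem_neighborsAtDist.mpr ⟨hzy, hy⟩⟩
        have h2 : #Q • 1 ≤ ∑ q ∈ Q, #(G.neighborsAtDist a q 3) :=
          card_nsmul_le_sum Q _ 1 fun q hq => card_pos.mpr (hQ q hq).2
        rw [smul_eq_mul, mul_one] at h2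
        omega
    _ = ∑ w ∈ insert b₁ (insert z Q), #(G.neighborsAtDist a w 3) := by
        rw [sum_insert hb1, sum_insert hzQ]
    _ ≤ G.crossEdgeCount a := sum_le_sum_of_subset hsub

end Fintype

end SimpleGraph

theorem vgr_no_edge_VCprime_general {V : Type*} [Fintype V] (G : SimpleGraph V) [DecidableRel G.Adj]
    (k ε n : ℕ) (hεk : 2 * ε ≤ k - 1)
    (hG : IsVGR G n k 5 (k * (k - 1) ^ 2 / 2 - ε)) (u v v' : V)
    (hdist : G.dist u v = 3)
    (hv' : G.neighborSet v ∩ distTwoSet G u = {v'}) :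
    ∀ w ∈ ((distTwoSet G v ∩ G.neighborSet v') \ (G.neighborSet u ∪ distTwoSet G u)) ∪ {v},
      ∀ x ∈ distTwoSet G u \ {v'}, ¬ G.Adj w x := by
  obtain ⟨-, hreg, hgirth, hcount⟩ := hG
  have hg : 5 ≤ G.egirth := by
    have : (G.girth : ℕ∞) ≤ G.egirth := G.egirth.natCast_toNat_le_self
    rwa [hgirth] at this
  have hg4 : 4 ≤ G.egirth := le_trans (by norm_num) hg
  obtain ⟨hvv', huv'⟩ : G.Adj v v' ∧ G.dist u v' = 2 := hv'.symm.subset rfl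
  have huniq (s : V) (hvs : G.Adj v s) (hus : G.dist u s = 2) : s = v' := hv'.subset ⟨hvs, hus⟩
  obtain ⟨-, -, p, hup, hv'p⟩ := dist_eq_two_iff.mp huv'
  have huniq' (s : V) (hus : G.Adj u s) (hvs : G.dist v s = 2) : s = p :=
    eq_of_adj_of_dist_eq_two_of_unique hg hdist hup hv'p.symm hvv'.symm huniq hus hvs
  rintro w (⟨⟨hvw, hv'w⟩, hwu⟩ | rfl) x ⟨hux, hxv'⟩ hwx
  · have huw : G.dist u w = 3 := by
      have := hv'w.diff_dist_adj (u := u)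
      have : G.dist u w ≠ 1 := fun h => hwu (Or.inl (dist_eq_one_iff_adj.mp h))
      have : G.dist u w ≠ 2 := fun h => hwu (Or.inr h)
      omega
    have hpx : ¬ G.Adj p x := fun hpx => hxv' (eq_of_adj_of_adj_of_adj_of_adj hg
      (fun h : p = w => hwu (Or.inl (h ▸ hup))) hv'p.symm hv'w hpx hwx.symm).symm
    have hvp : G.dist v p = 2 := dist_eq_two_of_adj_of_adj hg4
      (fun h => by simp [h, dist_eq_one_iff_adj.mpr hup] at hdist) hvv' hv'p
    obtain ⟨z, y, hvz, hzp, hzv', hzy, hvy⟩ := exists_adj_dist_eq_three_of_adj hg hdist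
      hup.symm huniq' hvw hv'w huw hux (fun h => hxv' (huniq x h hux)) hpx hwx
    have hcore_u := card_add_card_add_one_le_crossEdgeCount hg4 hdist hup hv'p.symm hvv'.symm
      huniq hux hxv' (fun h => absurd h hpx) hwx.symm huw
    have hcore_v := card_add_card_add_one_le_crossEdgeCount hg4 (dist_comm.trans hdist) hvv'
      hv'p hup.symm huniq' hvz hzp hzv' hzy hvy
    have hsplit_u := card_neighborsAtDist_two_add_three hreg hg huv'
    have hsplit_v := card_neighborsAtDist_two_add_three hreg hg hvp
    have hbudget_u := crossEdgeCount_le hreg hg (hcount u)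
    have hbudget_v := crossEdgeCount_le hreg hg (hcount v)
    omega
  · exact hxv' (huniq x hwx hux)

/-- Let `G` be a `vgr(n, k, 5, k(k-1)²/2 − ε)`-graph with `k ≥ 3` and
`0 < ε ≤ (k-1)/2`, let `u` be a vertex, let `v` be at distance exactly `3` from `u` with
unique neighbor `v'` in `N₂(u)`, and set `V_{C'} = (N₂(v) ∩ N(v')) ∖ (N(u) ∪ N₂(u))`.
Then no edge of `G` joins a vertex of `V_{C'} ∪ {v}` to a vertex of `N₂(u) ∖ {v'}`. -/
theorem vgr_no_edge_VCprime {V : Type*} [Fintype V] (G : SimpleGraph V) [DecidableRel G.Adj]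
    (k ε n : ℕ) (hk : 3 ≤ k) (hε : 0 < ε) (hεk : 2 * ε ≤ k - 1)
    (hG : IsVGR G n k 5 (k * (k - 1) ^ 2 / 2 - ε)) (u v v' : V)
    (hdist : G.dist u v = 3)
    (hv' : G.neighborSet v ∩ distTwoSet G u = {v'}) :
    ∀ w ∈ ((distTwoSet G v ∩ G.neighborSet v') \ (G.neighborSet u ∪ distTwoSet G u)) ∪ {v},
      ∀ x ∈ distTwoSet G u \ {v'}, ¬ G.Adj w x :=
  vgr_no_edge_VCprime_general G k ε n hεk hG u v v' hdist hv'
end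

section
/- Let k ≥ 3 and 0 < ε ≤ (k-1)/2 be integers and let G be a vgr(n, k, 5, k(k-1)²/2 − ε)-graph. Let u be a vertex of G, let v be a vertex at distance exactly 3 from u whose unique neighbor in N_2(u) is v', and define V_{C''} = N_2(v) ∖ (N(u) ∪ N_2(u) ∪ N(v')). Then for every neighbor v_i of v with v_i ≠ v', we have |N(v_i) ∩ V_{C''}| ≥ k − 2. -/
open SimpleGraph

/-!
Write `S = N₂(u)` and call a vertex far from `u` if its distance to `u` exceeds 2. As the girth
is 5, `|S| = k(k-1)`, every vertex of `S` has exactly one neighbour in `N(u)`, and the oriented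
pentagons through `u` are the ordered edges inside `S`; since there are `k(k-1)² - 2ε` of them,
at most `2ε` edges join `S` to far vertices.

At a far vertex `y`, each of the `k(k-1)` ordered pairs of neighbours spans at most `k - 1`
oriented pentagons through `y`, and the total is `k(k-1)² - 2ε`, so at most `2ε` pairs are
deficient. For neighbours `w ∈ S` and `c ∉ S` of `y`, both `(w, c)` and `(c, w)` are deficient
unless `c` has a neighbour in the branch of `w` below `N(u)`, and each neighbour of `c` in `S`
lies in at most one such branch. With `t = |N(y) ∩ S|` the two counts give
`t (k - t + 1) ≤ 3ε ≤ 3(k-1)/2`, so `t ≤ 1` as soon as `y` has a neighbour outside `S`.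
For `y = vᵢ` that neighbour is `v`, so at least `k - 2` neighbours of `vᵢ` other than `v` lie
outside `S`, and they all belong to `V_{C''}`.
-/

open Finset

lemma Finset.sum_add_card_le_card_mul {ι : Type*} {s D : Finset ι} {f : ι → ℕ} {n : ℕ}
    (hD : D ⊆ s) (hs : ∀ i ∈ s, f i ≤ n) (hDs : ∀ i ∈ D, f i + 1 ≤ n) :
    ∑ i ∈ s, f i + #D ≤ #s * n := by
  classical
  have hcard : #D = ∑ i ∈ s, if i ∈ D then 1 else 0 := by
    rw [sum_boole, Nat.cast_id, filter_mem_eq_inter, inter_eq_right.mpr hD]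
  rw [hcard, ← sum_add_distrib, ← smul_eq_mul, ← sum_const]
  refine sum_le_sum fun i hi => ?_
  split_ifs with h
  · exact hDs i h
  · simpa using hs i hi

namespace SimpleGraph

variable {V : Type*} {G : SimpleGraph V}

lemma not_adj_of_five_le_egirth (hG : 5 ≤ G.egirth) {a b c : V} (hab : G.Adj a b)
    (hbc : G.Adj b c) : ¬ G.Adj c a := by
  intro hca
  have hcyc : (Walk.cons hab (Walk.cons hbc (Walk.cons hca Walk.nil))).IsCycle := by
    simp [Walk.cons_isCycle_iff, hab.ne, hbc.ne, hca.ne, hab.ne.symm, hca.ne.symm]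
  exact absurd (le_egirth.mp hG _ _ hcyc) (by norm_num)

lemma commonNeighbors_subsingleton_of_five_le_egirth (hG : 5 ≤ G.egirth) {x y : V}
    (hxy : x ≠ y) : (G.commonNeighbors x y).Subsingleton := by
  intro b hb c hc
  obtain ⟨hxb, hyb⟩ := G.mem_commonNeighbors.mp hb
  obtain ⟨hxc, hyc⟩ := G.mem_commonNeighbors.mp hc
  by_contra hbc
  have hcyc : (Walk.cons hxb (Walk.cons hyb.symm (Walk.cons hyc (Walk.cons hxc.symm
      Walk.nil)))).IsCycle := by
    simp [Walk.cons_isCycle_iff, hxb.ne, hxc.ne, hyc.ne, hxb.ne.symm, hyb.ne.symm, hxc.ne.symm,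
      hxy, hxy.symm, hbc]
  exact absurd (le_egirth.mp hG _ _ hcyc) (by norm_num)

lemma dist_eq_two_iff_of_five_le_egirth (hG : 5 ≤ G.egirth) {u w : V} :
    G.dist u w = 2 ↔ u ≠ w ∧ ∃ b, G.Adj u b ∧ G.Adj b w := by
  rw [dist, ENat.toNat_eq_iff two_ne_zero, Nat.cast_ofNat, edist_eq_two_iff]
  constructor
  · rintro ⟨huw, -, b, hub, hwb⟩
    exact ⟨huw, b, hub, hwb.symm⟩
  · rintro ⟨huw, b, hub, hbw⟩
    exact ⟨huw, fun huw' => not_adj_of_five_le_egirth hG hub hbw huw'.symm, b, hub, hbw.symm⟩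

lemma two_lt_edist_iff' {u y : V} :
    2 < G.edist u y ↔ u ≠ y ∧ ¬ G.Adj u y ∧ G.dist u y ≠ 2 := by
  rw [two_lt_edist_iff, dist, Ne, Ne, ENat.toNat_eq_iff two_ne_zero, Nat.cast_ofNat,
    edist_eq_two_iff, ← Set.not_nonempty_iff_eq_empty]
  tauto

lemma not_adj_of_two_lt_edist {u y c : V} (hy : 2 < G.edist u y) (hyc : G.Adj y c) :
    ¬ G.Adj u c := fun huc =>
  Set.eq_empty_iff_forall_notMem.mp (two_lt_edist_iff.mp hy).2.2 c ⟨huc, hyc⟩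

lemma two_lt_edist_of_adj {u y c : V} (hy : 2 < G.edist u y) (hyc : G.Adj y c)
    (hc : G.dist u c ≠ 2) : 2 < G.edist u c := by
  refine two_lt_edist_iff'.mpr ⟨?_, not_adj_of_two_lt_edist hy hyc, hc⟩
  rintro rfl
  exact (two_lt_edist_iff'.mp hy).2.1 hyc.symm

lemma two_lt_edist_of_dist_eq_three {u v y : V} (huv : G.dist u v = 3) (hvy : G.Adj v y)
    (hy : G.dist u y ≠ 2) : 2 < G.edist u y := by
  refine two_lt_edist_iff'.mpr ⟨?_, fun huy => ?_, hy⟩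
  · rintro rfl
    rw [dist_eq_one_iff_adj.mpr hvy.symm] at huv
    omega
  · have := G.dist_le (Walk.cons huy (Walk.cons hvy.symm Walk.nil))
    simp only [Walk.length_cons, Walk.length_nil] at this
    omega

lemma mem_distTwoSet_sdiff_of_adj (hG : 5 ≤ G.egirth) {u v v' y x : V} (hy : 2 < G.edist u y)
    (hvy : G.Adj v y) (hvv' : G.Adj v v') (hyv' : y ≠ v') (hyx : G.Adj y x) (hxv : x ≠ v)
    (hxS : G.dist u x ≠ 2) :
    x ∈ distTwoSet G v \ (G.neighborSet u ∪ distTwoSet G u ∪ G.neighborSet v') := by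
  refine ⟨(dist_eq_two_iff_of_five_le_egirth hG).mpr ⟨Ne.symm hxv, y, hvy, hyx⟩, ?_⟩
  rintro ((hux | hxS') | hv'x)
  · exact not_adj_of_two_lt_edist hy hyx hux
  · exact hxS hxS'
  · exact hyv' <| commonNeighbors_subsingleton_of_five_le_egirth hG (Ne.symm hxv)
      ⟨hvy, hyx.symm⟩ ⟨hvv', (show G.Adj v' x from hv'x).symm⟩

/-- `z - b - p - q - c - z` is a 5-cycle: consecutive vertices are adjacent and vertices two
steps apart are distinct. -/
def IsPentagon (G : SimpleGraph V) (z b p q c : V) : Prop :=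
  G.Adj z b ∧ G.Adj b p ∧ G.Adj p q ∧ G.Adj q c ∧ G.Adj c z ∧
    b ≠ q ∧ p ≠ c ∧ p ≠ z ∧ q ≠ z ∧ b ≠ c

lemma IsPentagon.reverse {z b p q c : V} (h : G.IsPentagon z b p q c) :
    G.IsPentagon z c q p b := by
  obtain ⟨h1, h2, h3, h4, h5, n1, n2, n3, n4, n5⟩ := h
  exact ⟨h5.symm, h4.symm, h3.symm, h2.symm, h1.symm, n2.symm, n1.symm, n4, n3, n5.symm⟩

instance [DecidableEq V] [DecidableRel G.Adj] {z b p q c : V} :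
    Decidable (G.IsPentagon z b p q c) := by
  unfold IsPentagon; infer_instance

lemma Walk.isCycle_cons_five_iff {z b p q c : V} (h1 : G.Adj z b) (h2 : G.Adj b p)
    (h3 : G.Adj p q) (h4 : G.Adj q c) (h5 : G.Adj c z) :
    (Walk.cons h1 (Walk.cons h2 (Walk.cons h3 (Walk.cons h4 (Walk.cons h5 Walk.nil))))).IsCycle ↔
      b ≠ q ∧ p ≠ c ∧ p ≠ z ∧ q ≠ z ∧ b ≠ c := by
  have := h1.ne; have := h2.ne; have := h3.ne; have := h4.ne; have := h5.ne
  simp [Walk.cons_isCycle_iff]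
  grind

lemma Walk.exists_eq_cons_five {z : V} (w : G.Walk z z) (hw : w.length = 5) :
    ∃ (b p q c : V) (h1 : G.Adj z b) (h2 : G.Adj b p) (h3 : G.Adj p q) (h4 : G.Adj q c)
      (h5 : G.Adj c z),
      w = Walk.cons h1 (Walk.cons h2 (Walk.cons h3 (Walk.cons h4 (Walk.cons h5 Walk.nil)))) := by
  match w, hw with
  | .cons h1 (.cons h2 (.cons h3 (.cons h4 (.cons h5 .nil)))), _ =>
    exact ⟨_, _, _, _, h1, h2, h3, h4, h5, rfl⟩

/-- `c` is adjacent to the branch of `w`: to a vertex hanging below the same neighbour `b` of `u`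
as `w`. -/
def HasNeighborInBranch (G : SimpleGraph V) (u w c : V) : Prop :=
  ∃ b s, G.Adj u b ∧ G.Adj w b ∧ G.Adj b s ∧ G.Adj s c

section DistTwo

variable [Fintype V]

noncomputable def distTwoFinset (G : SimpleGraph V) (u : V) : Finset V := {w | G.dist u w = 2}

@[simp]
lemma mem_distTwoFinset {u w : V} : w ∈ G.distTwoFinset u ↔ G.dist u w = 2 := by
  simp [distTwoFinset]

variable [DecidableRel G.Adj]

instance {u w c : V} : Decidable (G.HasNeighborInBranch u w c) := by
  unfold HasNeighborInBranch; infer_instance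

lemma card_filter_hasNeighborInBranch_le (hG : 5 ≤ G.egirth) {u y c : V} (huy : ¬ G.Adj u y)
    (huc : ¬ G.Adj u c) {W : Finset V} (hW : ∀ w ∈ W, G.Adj y w) :
    #{w ∈ W | G.HasNeighborInBranch u w c} ≤ #{s ∈ G.distTwoFinset u | G.Adj c s} := by
  refine card_le_card_of_forall_subsingleton
    (fun w s => ∃ b, G.Adj u b ∧ G.Adj w b ∧ G.Adj b s) (fun w hw => ?_) (fun s hs => ?_)
  · obtain ⟨-, b, s, hub, hwb, hbs, hsc⟩ := mem_filter.mp hw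
    have hsu : u ≠ s := by
      rintro rfl
      exact huc hsc
    refine ⟨s, ?_, b, hub, hwb, hbs⟩
    simpa [dist_eq_two_iff_of_five_le_egirth hG, hsc.symm, hsu] using ⟨b, hub, hbs⟩
  · rintro w ⟨hw, b, hub, hwb, hbs⟩ w' ⟨hw', b', hub', hw'b', hb's⟩
    simp only [mem_filter, mem_distTwoFinset] at hs hw hw'
    have hbb' : b = b' := commonNeighbors_subsingleton_of_five_le_egirth hG
      (dist_eq_two_iff_of_five_le_egirth hG |>.mp hs.1).1 ⟨hub, hbs.symm⟩ ⟨hub', hb's.symm⟩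
    subst hbb'
    have hby : b ≠ y := by
      rintro rfl
      exact huy hub
    exact commonNeighbors_subsingleton_of_five_le_egirth hG hby ⟨hwb.symm, hW w hw.1⟩
      ⟨hw'b'.symm, hW w' hw'.1⟩

end DistTwo

variable [Fintype V] [DecidableEq V] [DecidableRel G.Adj]

/-- The oriented 5-cycles through `z`, recorded by their four other vertices in order. -/
def pentagons (G : SimpleGraph V) [DecidableRel G.Adj] (z : V) : Finset (V × V × V × V) :=
  {x | G.IsPentagon z x.1 x.2.1 x.2.2.1 x.2.2.2}

@[simp]
lemma mem_pentagons {z b p q c : V} :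
    (b, p, q, c) ∈ G.pentagons z ↔ G.IsPentagon z b p q c := by
  simp [pentagons]

lemma doubleCycleCountAt_five_eq_card_pentagons (z : V) :
    doubleCycleCountAt G 5 z = #(G.pentagons z) := by
  let f : G.Walk z z → V × V × V × V :=
    fun w => (w.getVert 1, w.getVert 2, w.getVert 3, w.getVert 4)
  have hinj : Set.InjOn f {w | w.IsCycle ∧ w.length = 5} := by
    rintro w ⟨-, hw⟩ w' ⟨-, hw'⟩ hf
    obtain ⟨b, p, q, c, h1, h2, h3, h4, h5, rfl⟩ := w.exists_eq_cons_five hw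
    obtain ⟨b', p', q', c', h1', h2', h3', h4', h5', rfl⟩ := w'.exists_eq_cons_five hw'
    simp only [f, Walk.getVert_cons_succ, Walk.getVert_zero, Prod.mk.injEq] at hf
    obtain ⟨rfl, rfl, rfl, rfl⟩ := hf
    rfl
  have himg : f '' {w | w.IsCycle ∧ w.length = 5} = G.pentagons z := by
    ext ⟨b, p, q, c⟩
    simp only [Set.mem_image, Set.mem_ofPred_eq, mem_coe, mem_pentagons]
    constructor
    · rintro ⟨w, ⟨hc, hw⟩, hf⟩
      obtain ⟨b', p', q', c', h1, h2, h3, h4, h5, rfl⟩ := w.exists_eq_cons_five hw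
      simp only [f, Walk.getVert_cons_succ, Walk.getVert_zero, Prod.mk.injEq] at hf
      obtain ⟨rfl, rfl, rfl, rfl⟩ := hf
      exact ⟨h1, h2, h3, h4, h5, (Walk.isCycle_cons_five_iff h1 h2 h3 h4 h5).mp hc⟩
    · rintro ⟨h1, h2, h3, h4, h5, hne⟩
      exact ⟨_, ⟨(Walk.isCycle_cons_five_iff h1 h2 h3 h4 h5).mpr hne, rfl⟩, rfl⟩
  rw [doubleCycleCountAt, ← hinj.ncard_image, himg, Set.ncard_coe_finset]

def pentagonsThrough (G : SimpleGraph V) [DecidableRel G.Adj] (z b c : V) :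
    Finset (V × V × V × V) :=
  {x ∈ G.pentagons z | x.1 = b ∧ x.2.2.2 = c}

lemma card_pentagons_eq_sum (z : V) :
    #(G.pentagons z) =
      ∑ bc ∈ (G.neighborFinset z).offDiag, #(G.pentagonsThrough z bc.1 bc.2) := by
  rw [card_eq_sum_card_fiberwise (f := fun x => (x.1, x.2.2.2))]
  · refine sum_congr rfl fun bc _ => ?_
    simp only [pentagonsThrough, Prod.ext_iff]
  · rintro ⟨b, p, q, c⟩ hx
    obtain ⟨h1, -, -, -, h5, -, -, -, -, hbc⟩ := mem_pentagons.mp hx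
    simpa [h1, h5.symm] using hbc

lemma card_pentagonsThrough_comm (z b c : V) :
    #(G.pentagonsThrough z b c) = #(G.pentagonsThrough z c b) := by
  let rev : V × V × V × V → V × V × V × V := fun x => (x.2.2.2, x.2.2.1, x.2.1, x.1)
  refine card_nbij' rev rev ?_ ?_ (fun _ _ => rfl) (fun _ _ => rfl) <;>
  · rintro ⟨b', p, q, c'⟩ hx
    simp only [pentagonsThrough, mem_filter, mem_pentagons, mem_coe, rev] at hx ⊢
    exact ⟨hx.1.reverse, hx.2.2, hx.2.1⟩

lemma card_pentagonsThrough_le (hG : 5 ≤ G.egirth) {z b c : V} {s : Finset V}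
    (hs : ∀ x ∈ G.pentagonsThrough z b c, x.2.1 ∈ s) :
    #(G.pentagonsThrough z b c) ≤ #s := by
  refine card_le_card_of_injOn (·.2.1) hs ?_
  rintro ⟨b, p, q, c⟩ hx ⟨b', p', q', c'⟩ hx' (rfl : p = p')
  simp only [pentagonsThrough, coe_filter, Set.mem_ofPred_eq, mem_pentagons] at hx hx'
  obtain ⟨⟨-, -, h3, h4, -, -, hpc, -⟩, rfl, rfl⟩ := hx
  obtain ⟨⟨-, -, h3', h4', -⟩, rfl, rfl⟩ := hx'
  rw [commonNeighbors_subsingleton_of_five_le_egirth hG hpc ⟨h3, h4.symm⟩ ⟨h3', h4'.symm⟩]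

lemma card_pentagonsThrough_lt_degree (hG : 5 ≤ G.egirth) {z b : V} (hzb : G.Adj z b) (c : V) :
    #(G.pentagonsThrough z b c) < G.degree b := by
  have hz : z ∈ G.neighborFinset b := by simpa using hzb.symm
  refine (card_pentagonsThrough_le hG (s := (G.neighborFinset b).erase z) ?_).trans_lt ?_
  · rintro ⟨b', p, q, c'⟩ hx
    simp only [pentagonsThrough, mem_filter, mem_pentagons] at hx
    obtain ⟨⟨-, h2, -, -, -, -, -, hpz, -⟩, rfl, -⟩ := hx
    simpa [hpz] using h2
  · have := hzb.degree_pos_right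
    rw [card_erase_of_mem hz, card_neighborFinset_eq_degree]
    omega

lemma card_pentagonsThrough_add_two_le_degree (hG : 5 ≤ G.egirth) {z b p c : V}
    (hzb : G.Adj z b) (hbp : G.Adj b p) (hpz : p ≠ z) (hp : ∀ q, ¬ G.IsPentagon z b p q c) :
    #(G.pentagonsThrough z b c) + 2 ≤ G.degree b := by
  have hz : z ∈ G.neighborFinset b := by simpa using hzb.symm
  have hp' : p ∈ (G.neighborFinset b).erase z := by simpa [hpz] using hbp
  have hle := card_pentagonsThrough_le hG (s := ((G.neighborFinset b).erase z).erase p) <| by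
    rintro ⟨b', p', q, c'⟩ hx
    simp only [pentagonsThrough, mem_filter, mem_pentagons] at hx
    obtain ⟨hpen, rfl, rfl⟩ := hx
    have hpp' : p' ≠ p := by
      rintro rfl
      exact hp q hpen
    obtain ⟨-, h2, -, -, -, -, -, hpz', -⟩ := hpen
    simpa [hpz', hpp'] using h2
  rw [card_erase_of_mem hp', card_erase_of_mem hz, card_neighborFinset_eq_degree] at hle
  have := card_pos.mpr ⟨p, hp'⟩
  rw [card_erase_of_mem hz, card_neighborFinset_eq_degree] at this
  omega

lemma card_le_of_forall_pentagonsThrough_add_two_le (hG : 5 ≤ G.egirth) {k ε : ℕ}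
    (hreg : G.IsRegularOfDegree k) {z : V} (hT : k * (k - 1) ^ 2 ≤ #(G.pentagons z) + 2 * ε)
    {D : Finset (V × V)} (hD : D ⊆ (G.neighborFinset z).offDiag)
    (hDk : ∀ bc ∈ D, #(G.pentagonsThrough z bc.1 bc.2) + 2 ≤ k) : #D ≤ 2 * ε := by
  have hsum := sum_add_card_le_card_mul (n := k - 1)
    (f := fun bc => #(G.pentagonsThrough z bc.1 bc.2)) hD (fun bc hbc => ?_) (fun bc hbc => ?_)
  · rw [← card_pentagons_eq_sum, offDiag_card, card_neighborFinset_eq_degree, hreg z,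
      ← Nat.mul_sub_one, mul_assoc, ← sq] at hsum
    omega
  · have := card_pentagonsThrough_lt_degree hG (mem_neighborFinset _ _ _ |>.mp
      (mem_offDiag.mp hbc).1) bc.2
    rw [hreg] at this
    omega
  · have := hDk bc hbc
    omega

lemma card_le_of_disjoint_image_swap (hG : 5 ≤ G.egirth) {k ε : ℕ}
    (hreg : G.IsRegularOfDegree k) {z : V} (hT : k * (k - 1) ^ 2 ≤ #(G.pentagons z) + 2 * ε)
    {D : Finset (V × V)} (hD : D ⊆ (G.neighborFinset z).offDiag)
    (hswap : Disjoint D (D.image Prod.swap))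
    (hDk : ∀ bc ∈ D, #(G.pentagonsThrough z bc.1 bc.2) + 2 ≤ k) : #D ≤ ε := by
  have := card_le_of_forall_pentagonsThrough_add_two_le hG hreg hT
    (D := D ∪ D.image Prod.swap) ?_ ?_
  · rw [card_union_of_disjoint hswap, card_image_of_injective _ Prod.swap_injective] at this
    omega
  · refine union_subset hD fun bc hbc => ?_
    obtain ⟨cb, hcb, rfl⟩ := mem_image.mp hbc
    obtain ⟨h1, h2, h3⟩ := mem_offDiag.mp (hD hcb)
    exact mem_offDiag.mpr ⟨h2, h1, h3.symm⟩
  · intro bc hbc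
    rcases mem_union.mp hbc with hbc | hbc
    · exact hDk bc hbc
    · obtain ⟨cb, hcb, rfl⟩ := mem_image.mp hbc
      rw [Prod.fst_swap, Prod.snd_swap, card_pentagonsThrough_comm]
      exact hDk cb hcb

lemma card_distTwoFinset (hG : 5 ≤ G.egirth) {k : ℕ} (hreg : G.IsRegularOfDegree k) (u : V) :
    #(G.distTwoFinset u) = k * (k - 1) := by
  have hS : G.distTwoFinset u =
      (G.neighborFinset u).biUnion fun b => (G.neighborFinset b).erase u := by
    ext w
    simp only [mem_distTwoFinset, dist_eq_two_iff_of_five_le_egirth hG, mem_biUnion,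
      mem_neighborFinset, mem_erase]
    constructor
    · rintro ⟨huw, b, hub, hbw⟩
      exact ⟨b, hub, Ne.symm huw, hbw⟩
    · rintro ⟨b, hub, hwu, hbw⟩
      exact ⟨Ne.symm hwu, b, hub, hbw⟩
  rw [hS, card_biUnion]
  · rw [sum_congr rfl fun b hb => by
      rw [card_erase_of_mem (by simpa using (mem_neighborFinset _ _ _).mp hb |>.symm),
        card_neighborFinset_eq_degree, hreg b]]
    rw [sum_const, card_neighborFinset_eq_degree, hreg u, smul_eq_mul]
  · intro b hb b' hb' hbb'
    rw [Function.onFun, Finset.disjoint_left]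
    intro w hw hw'
    simp only [mem_coe, mem_erase, mem_neighborFinset] at hb hb' hw hw'
    exact hbb' <| commonNeighbors_subsingleton_of_five_le_egirth hG hw.1.symm
      ⟨hb, hw.2.symm⟩ ⟨hb', hw'.2.symm⟩

lemma card_pentagons_le_sum_card_adj (hG : 5 ≤ G.egirth) (u : V) :
    #(G.pentagons u) ≤ ∑ s ∈ G.distTwoFinset u, #{t ∈ G.distTwoFinset u | G.Adj s t} := by
  set S := G.distTwoFinset u
  have hS : ∀ {b p}, G.Adj u b → G.Adj b p → p ≠ u → p ∈ S := fun hub hbp hpu => by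
    simpa [S, dist_eq_two_iff_of_five_le_egirth hG] using ⟨Ne.symm hpu, _, hub, hbp⟩
  calc #(G.pentagons u)
      ≤ #{st ∈ S ×ˢ S | G.Adj st.1 st.2} := by
        refine card_le_card_of_injOn (fun x => (x.2.1, x.2.2.1)) ?_ ?_
        · rintro ⟨b, p, q, c⟩ hx
          obtain ⟨h1, h2, h3, h4, h5, -, -, hpu, hqu, -⟩ := mem_pentagons.mp hx
          simpa using ⟨⟨hS h1 h2 hpu, hS h5.symm h4.symm hqu⟩, h3⟩
        · rintro ⟨b, p, q, c⟩ hx ⟨b', p', q', c'⟩ hx' h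
          simp only [mem_coe, mem_pentagons, Prod.mk.injEq] at hx hx' h
          obtain ⟨rfl, rfl⟩ := h
          obtain ⟨h1, h2, -, h4, h5, -, -, hpu, hqu, -⟩ := hx
          obtain ⟨h1', h2', -, h4', h5', -⟩ := hx'
          have hb := commonNeighbors_subsingleton_of_five_le_egirth hG (Ne.symm hpu)
            ⟨h1, h2.symm⟩ ⟨h1', h2'.symm⟩
          have hc := commonNeighbors_subsingleton_of_five_le_egirth hG (Ne.symm hqu)
            ⟨h5.symm, h4⟩ ⟨h5'.symm, h4'⟩
          rw [hb, hc]
    _ = ∑ s ∈ S, #{t ∈ S | G.Adj s t} := by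
        simp only [card_filter, sum_product]

lemma card_adj_add_card_adj_lt_degree (hG : 5 ≤ G.egirth) {u s : V}
    (hs : s ∈ G.distTwoFinset u) {Y : Finset V} (hY : ∀ y ∈ Y, 2 < G.edist u y) :
    #{t ∈ G.distTwoFinset u | G.Adj s t} + #{y ∈ Y | G.Adj s y} < G.degree s := by
  obtain ⟨-, b, hub, hbs⟩ := (dist_eq_two_iff_of_five_le_egirth hG).mp (mem_distTwoFinset.mp hs)
  have hdisj : Disjoint {t ∈ G.distTwoFinset u | G.Adj s t} {y ∈ Y | G.Adj s y} :=
    disjoint_filter_filter <| Finset.disjoint_left.mpr fun y hyS hyY =>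
      (two_lt_edist_iff'.mp (hY y hyY)).2.2 (mem_distTwoFinset.mp hyS)
  have hsub : {t ∈ G.distTwoFinset u | G.Adj s t} ∪ {y ∈ Y | G.Adj s y} ⊆
      (G.neighborFinset s).erase b := by
    intro t ht
    simp only [mem_union, mem_filter, mem_distTwoFinset, mem_erase, mem_neighborFinset] at ht ⊢
    refine ⟨?_, ht.elim (·.2) (·.2)⟩
    rintro rfl
    rcases ht with ⟨hb2, -⟩ | ⟨hbY, -⟩
    · rw [dist_eq_one_iff_adj.mpr hub] at hb2
      omega
    · exact (two_lt_edist_iff'.mp (hY t hbY)).2.1 hub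
  have hle := card_le_card hsub
  rw [card_union_of_disjoint hdisj, card_erase_of_mem ((mem_neighborFinset _ _ _).mpr hbs.symm),
    card_neighborFinset_eq_degree] at hle
  have := hbs.degree_pos_right
  omega

lemma sum_card_adj_distTwoFinset_le (hG : 5 ≤ G.egirth) {k ε : ℕ}
    (hreg : G.IsRegularOfDegree k) {u : V} (hT : k * (k - 1) ^ 2 ≤ #(G.pentagons u) + 2 * ε)
    {Y : Finset V} (hY : ∀ y ∈ Y, 2 < G.edist u y) :
    ∑ y ∈ Y, #{s ∈ G.distTwoFinset u | G.Adj y s} ≤ 2 * ε := by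
  have hpent := card_pentagons_le_sum_card_adj hG u
  set S := G.distTwoFinset u
  have hdc : ∑ y ∈ Y, #{s ∈ S | G.Adj y s} = ∑ s ∈ S, #{y ∈ Y | G.Adj s y} :=
    calc ∑ y ∈ Y, #{s ∈ S | G.Adj y s}
        = ∑ y ∈ Y, #(S.bipartiteBelow G.Adj y) :=
          sum_congr rfl fun y _ => by simp only [bipartiteBelow, G.adj_comm y]
      _ = ∑ s ∈ S, #(Y.bipartiteAbove G.Adj s) :=
          (sum_card_bipartiteAbove_eq_sum_card_bipartiteBelow _).symm
  have hloc := sum_le_card_nsmul S (fun s => #{t ∈ S | G.Adj s t} + #{y ∈ Y | G.Adj s y} + 1) k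
    fun s hs => (card_adj_add_card_adj_lt_degree hG hs hY).trans_eq (hreg s)
  rw [sum_add_distrib, sum_add_distrib, ← hdc, sum_const, card_distTwoFinset hG hreg u,
    smul_eq_mul, smul_eq_mul, mul_one] at hloc
  have hk : k * (k - 1) * k = k * (k - 1) ^ 2 + k * (k - 1) := by
    rcases k with _ | k
    · rfl
    · simp only [Nat.add_sub_cancel]
      ring
  omega

lemma card_pentagonsThrough_add_two_le_degree_of_not_hasNeighborInBranch
    (hG : 5 ≤ G.egirth) {u y w c : V} (huy : ¬ G.Adj u y) (hyw : G.Adj y w) (hw : G.dist u w = 2)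
    (hwc : ¬ G.HasNeighborInBranch u w c) :
    #(G.pentagonsThrough y w c) + 2 ≤ G.degree w := by
  obtain ⟨-, b, hub, hbw⟩ := (dist_eq_two_iff_of_five_le_egirth hG).mp hw
  refine card_pentagonsThrough_add_two_le_degree hG hyw hbw.symm ?_ ?_
  · rintro rfl
    exact huy hub
  · rintro q ⟨-, -, hbq, hqc, -⟩
    exact hwc ⟨b, q, hub, hbw.symm, hbq, hqc⟩

lemma card_adj_add_card_not_mem_distTwoFinset {k : ℕ} (hreg : G.IsRegularOfDegree k)
    (u y : V) :
    #{w ∈ G.distTwoFinset u | G.Adj y w} + #{c ∈ G.neighborFinset y | c ∉ G.distTwoFinset u}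
      = k := by
  have hW : {w ∈ G.distTwoFinset u | G.Adj y w} =
      {c ∈ G.neighborFinset y | c ∈ G.distTwoFinset u} := by
    ext w
    simp [and_comm]
  rw [hW, card_filter_add_card_filter_not, card_neighborFinset_eq_degree, hreg y]

lemma card_adj_mul_card_le (hG : 5 ≤ G.egirth) {k ε : ℕ} (hreg : G.IsRegularOfDegree k)
    {u y : V} (hT : k * (k - 1) ^ 2 ≤ #(G.pentagons y) + 2 * ε) (hy : 2 < G.edist u y) :
    #{w ∈ G.distTwoFinset u | G.Adj y w} * #{c ∈ G.neighborFinset y | c ∉ G.distTwoFinset u}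
      ≤ ε + ∑ c ∈ G.neighborFinset y with c ∉ G.distTwoFinset u,
        #{s ∈ G.distTwoFinset u | G.Adj c s} := by
  obtain ⟨-, huy, -⟩ := two_lt_edist_iff'.mp hy
  set S := G.distTwoFinset u
  set W := {w ∈ S | G.Adj y w}
  set C := {c ∈ G.neighborFinset y | c ∉ S}
  set D := {wc ∈ W ×ˢ C | ¬ G.HasNeighborInBranch u wc.1 wc.2}
  have hD : ∀ wc ∈ D, (wc.1 ∈ S ∧ G.Adj y wc.1) ∧ (G.Adj y wc.2 ∧ wc.2 ∉ S) ∧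
      ¬ G.HasNeighborInBranch u wc.1 wc.2 := fun wc hwc => by
    simpa [D, W, C, and_assoc] using hwc
  have hcardD : #D ≤ ε := by
    refine card_le_of_disjoint_image_swap hG hreg hT (fun wc hwc => ?_) ?_ (fun wc hwc => ?_)
    · obtain ⟨⟨hwS, hyw⟩, ⟨hyc, hcS⟩, -⟩ := hD wc hwc
      rw [mem_offDiag, mem_neighborFinset, mem_neighborFinset]
      exact ⟨hyw, hyc, fun h => hcS (h ▸ hwS)⟩
    · rw [Finset.disjoint_left]
      intro wc hwc hwc'
      obtain ⟨cw, hcw, rfl⟩ := mem_image.mp hwc'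
      exact (hD _ hwc).2.1.2 (hD _ hcw).1.1
    · obtain ⟨⟨hwS, hyw⟩, -, hj⟩ := hD wc hwc
      rw [← hreg wc.1]
      exact card_pentagonsThrough_add_two_le_degree_of_not_hasNeighborInBranch hG huy hyw
        (mem_distTwoFinset.mp hwS) hj
  have hcount : ∀ c ∈ C,
      #W ≤ #{w ∈ W | ¬ G.HasNeighborInBranch u w c} + #{s ∈ S | G.Adj c s} := fun c hc => by
    have : #{w ∈ W | G.HasNeighborInBranch u w c} ≤ #{s ∈ S | G.Adj c s} :=
      card_filter_hasNeighborInBranch_le hG huy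
        (not_adj_of_two_lt_edist hy ((mem_neighborFinset _ _ _).mp (mem_filter.mp hc).1))
        fun w hw => (mem_filter.mp hw).2
    rw [← card_filter_add_card_filter_not (G.HasNeighborInBranch u · c)]
    omega
  calc #W * #C = ∑ c ∈ C, #W := by rw [sum_const, smul_eq_mul, mul_comm]
    _ ≤ ∑ c ∈ C, (#{w ∈ W | ¬ G.HasNeighborInBranch u w c} + #{s ∈ S | G.Adj c s}) :=
        sum_le_sum hcount
    _ = #D + ∑ c ∈ C, #{s ∈ S | G.Adj c s} := by
        rw [sum_add_distrib]
        congr 1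
        simp only [D, card_filter, sum_product_right]
    _ ≤ ε + ∑ c ∈ C, #{s ∈ S | G.Adj c s} := by gcongr

lemma card_adj_distTwoFinset_le_one (hG : 5 ≤ G.egirth) {k ε : ℕ}
    (hreg : G.IsRegularOfDegree k) (hT : ∀ z, k * (k - 1) ^ 2 ≤ #(G.pentagons z) + 2 * ε)
    (hεk : 2 * ε ≤ k - 1) {u y c : V} (hy : 2 < G.edist u y) (hyc : G.Adj y c)
    (hc : G.dist u c ≠ 2) : #{w ∈ G.distTwoFinset u | G.Adj y w} ≤ 1 := by
  have hCfar : ∀ c ∈ {c ∈ G.neighborFinset y | c ∉ G.distTwoFinset u}, 2 < G.edist u c :=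
    fun c hc => by
      obtain ⟨hyc, hcS⟩ := mem_filter.mp hc
      exact two_lt_edist_of_adj hy ((mem_neighborFinset _ _ _).mp hyc) (by simpa using hcS)
  have hyC : y ∉ {c ∈ G.neighborFinset y | c ∉ G.distTwoFinset u} := by simp
  have hA := card_adj_mul_card_le hG hreg (hT y) hy
  have hB := sum_card_adj_distTwoFinset_le hG hreg (hT u)
    (Y := insert y {c ∈ G.neighborFinset y | c ∉ G.distTwoFinset u})
    fun z hz => (mem_insert.mp hz).elim (· ▸ hy) (hCfar z)
  rw [sum_insert hyC] at hB
  have hk := card_adj_add_card_not_mem_distTwoFinset hreg u y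
  have hCpos : 0 < #{c ∈ G.neighborFinset y | c ∉ G.distTwoFinset u} :=
    card_pos.mpr ⟨c, by simpa [hyc] using hc⟩
  by_contra! ht
  have hεk' : 2 * ε + 1 ≤ k := by omega
  nlinarith

end SimpleGraph

lemma IsVGR.five_le_egirth {V : Type*} [Fintype V] {G : SimpleGraph V} [DecidableRel G.Adj]
    {n k lam : ℕ} (h : IsVGR G n k 5 lam) : 5 ≤ G.egirth := by
  have hgirth : G.egirth.toNat = 5 := by exact_mod_cast h.2.2.1
  exact ((ENat.toNat_eq_iff (by norm_num)).mp hgirth).ge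

lemma IsVGR.isRegularOfDegree {V : Type*} [Fintype V] {G : SimpleGraph V} [DecidableRel G.Adj]
    {n k g lam : ℕ} (h : IsVGR G n k g lam) : G.IsRegularOfDegree k :=
  h.2.1

lemma IsVGR.le_card_pentagons_add {V : Type*} [Fintype V] [DecidableEq V] {G : SimpleGraph V}
    [DecidableRel G.Adj] {n k ε : ℕ} (h : IsVGR G n k 5 (k * (k - 1) ^ 2 / 2 - ε)) (z : V) :
    k * (k - 1) ^ 2 ≤ #(G.pentagons z) + 2 * ε := by
  rw [← doubleCycleCountAt_five_eq_card_pentagons, h.2.2.2 z]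
  obtain ⟨m, hm⟩ := (Nat.even_mul_pred_self k).mul_right (k - 1)
  rw [sq, ← mul_assoc, hm]
  omega

theorem vgr_Li_lower_bound_general {V : Type*} [Fintype V] (G : SimpleGraph V) [DecidableRel G.Adj]
    (k ε n : ℕ) (hεk : 2 * ε ≤ k - 1)
    (hG : IsVGR G n k 5 (k * (k - 1) ^ 2 / 2 - ε)) (u v v' : V)
    (hdist : G.dist u v = 3)
    (hv' : G.neighborSet v ∩ distTwoSet G u = {v'}) :
    ∀ vi : V, G.Adj v vi → vi ≠ v' →
      k - 2 ≤ (G.neighborSet vi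
        ∩ (distTwoSet G v \ (G.neighborSet u ∪ distTwoSet G u ∪ G.neighborSet v'))).ncard := by
  classical
  intro vi hvvi hvi
  have hG5 := hG.five_le_egirth
  have hvv' : G.Adj v v' := ((Set.ext_iff.mp hv' v').mpr rfl).1
  have hfar : 2 < G.edist u vi := two_lt_edist_of_dist_eq_three hdist hvvi
    fun h2 => hvi ((Set.ext_iff.mp hv' vi).mp ⟨hvvi, h2⟩)
  have ht := card_adj_distTwoFinset_le_one hG5 hG.isRegularOfDegree hG.le_card_pentagons_add
    hεk hfar hvvi.symm (by omega)
  have hk := card_adj_add_card_not_mem_distTwoFinset hG.isRegularOfDegree u vi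
  set X := {c ∈ G.neighborFinset vi | c ∉ G.distTwoFinset u}.erase v
  have hX : (X : Set V) ⊆ G.neighborSet vi
      ∩ (distTwoSet G v \ (G.neighborSet u ∪ distTwoSet G u ∪ G.neighborSet v')) := by
    intro x hx
    simp only [X, coe_erase, coe_filter, mem_neighborFinset, mem_distTwoFinset, Set.mem_sdiff,
      Set.mem_singleton_iff, Set.mem_ofPred_eq] at hx
    obtain ⟨⟨hvix, hxS⟩, hxv⟩ := hx
    exact ⟨hvix, mem_distTwoSet_sdiff_of_adj hG5 hfar hvvi hvv' hvi hvix hxv hxS⟩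
  calc k - 2 ≤ #X := by
        rw [card_erase_of_mem (by simpa [hvvi.symm] using hdist.trans_ne (by norm_num))]
        omega
    _ = (X : Set V).ncard := (Set.ncard_coe_finset X).symm
    _ ≤ _ := Set.ncard_le_ncard hX

/-- Let `G` be a `vgr(n, k, 5, k(k-1)²/2 − ε)`-graph with `k ≥ 3` and
`0 < ε ≤ (k-1)/2`, let `u` be a vertex, let `v` be at distance exactly `3` from `u` with
unique neighbor `v'` in `N₂(u)`, and set `V_{C''} = N₂(v) ∖ (N(u) ∪ N₂(u) ∪ N(v'))`.
Then every neighbor `vᵢ ≠ v'` of `v` satisfies `|N(vᵢ) ∩ V_{C''}| ≥ k − 2`. -/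
theorem vgr_Li_lower_bound {V : Type*} [Fintype V] (G : SimpleGraph V) [DecidableRel G.Adj]
    (k ε n : ℕ) (hk : 3 ≤ k) (hε : 0 < ε) (hεk : 2 * ε ≤ k - 1)
    (hG : IsVGR G n k 5 (k * (k - 1) ^ 2 / 2 - ε)) (u v v' : V)
    (hdist : G.dist u v = 3)
    (hv' : G.neighborSet v ∩ distTwoSet G u = {v'}) :
    ∀ vi : V, G.Adj v vi → vi ≠ v' →
      k - 2 ≤ (G.neighborSet vi
        ∩ (distTwoSet G v \ (G.neighborSet u ∪ distTwoSet G u ∪ G.neighborSet v'))).ncard :=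
  vgr_Li_lower_bound_general G k ε n hεk hG u v v' hdist hv'
end
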